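/- Let R be a convergent, forward-closed rewrite system, l1 → r1 a rule in R with l1|_p = σ(l2) for some position p ≠ ε, rule l2 → r2 ∈ R, and substitution σ. Then the sets of R-irreducible terms and of (R \ {l1 → r1})-irreducible terms coincide: IRR(R) = IRR(R \ {l1 → r1}). -/

import Mathlib

/-! Basic first-order terms, positions, substitutions and rewriting. -/

inductive Term (F : Type) : Type
  | var : Nat → Term F
  | app : F → List (Term F) → Term F

namespace Term

def subst {F : Type} (σ : Nat → Term F) : Term F → Term F
  | var n => σ n
  | app f ts => app f (ts.attach.map fun ⟨t, _⟩ => t.subst σ)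

def root {F : Type} : Term F → Option F
  | var _ => none
  | app f _ => some f

def label {F : Type} : Term F → F ⊕ Nat
  | var n => Sum.inr n
  | app f _ => Sum.inl f

def IsVar {F : Type} : Term F → Prop
  | var _ => True
  | app _ _ => False

def varsL {F : Type} : Term F → List Nat
  | var n => [n]
  | app _ ts => (ts.attach.map fun ⟨t, _⟩ => t.varsL).flatten

end Term

abbrev Rule (F : Type) := Term F × Term F
abbrev TRS (F : Type) := Set (Rule F)

/-- `SubtermAt t p u` : the subterm of `t` at position `p` is `u`. -/
inductive SubtermAt {F : Type} : Term F → List Nat → Term F → Prop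
  | here (t : Term F) : SubtermAt t [] t
  | there {f : F} {ts : List (Term F)} {i : Nat} {u : Term F} {p : List Nat} {v : Term F} :
      ts[i]? = some u → SubtermAt u p v → SubtermAt (Term.app f ts) (i :: p) v

/-- `ReplaceAt t p v t'` : replacing the subterm of `t` at position `p` by `v` yields `t'`. -/
inductive ReplaceAt {F : Type} : Term F → List Nat → Term F → Term F → Prop
  | here (t u : Term F) : ReplaceAt t [] u u
  | there {f : F} {ts : List (Term F)} {i : Nat} {u : Term F} {p : List Nat} {v w : Term F} :
      ts[i]? = some u → ReplaceAt u p v w →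
      ReplaceAt (Term.app f ts) (i :: p) v (Term.app f (ts.set i w))

variable {F : Type}

/-- One rewrite step using the given rule (at some position, with some substitution). -/
def RuleStep (ρ : Rule F) (s t : Term F) : Prop :=
  ∃ (σ : Nat → Term F) (p : List Nat),
    SubtermAt s p (ρ.1.subst σ) ∧ ReplaceAt s p (ρ.2.subst σ) t

def OneStep (R : TRS F) (s t : Term F) : Prop := ∃ ρ ∈ R, RuleStep ρ s t

/-- A rewrite step at the root position. -/
def RootStep (R : TRS F) (s t : Term F) : Prop :=
  ∃ ρ ∈ R, ∃ σ : Nat → Term F, s = ρ.1.subst σ ∧ t = ρ.2.subst σ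

def StarRW (R : TRS F) : Term F → Term F → Prop := Relation.ReflTransGen (OneStep R)
def Plus (R : TRS F) : Term F → Term F → Prop := Relation.TransGen (OneStep R)
/-- Convertibility (the congruence / equational theory generated by `R`). -/
def Conv (R : TRS F) : Term F → Term F → Prop := Relation.EqvGen (OneStep R)
def Joinable (R : TRS F) (s t : Term F) : Prop := ∃ u, StarRW R s u ∧ StarRW R t u
def NormalForm (R : TRS F) (t : Term F) : Prop := ∀ u, ¬ OneStep R t u
/-- `t` is the `R`-normal form of `s`. -/
def NFof (R : TRS F) (s t : Term F) : Prop := StarRW R s t ∧ NormalForm R t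
def Terminating (R : TRS F) : Prop := WellFounded (fun a b : Term F => OneStep R b a)
def Confluent (R : TRS F) : Prop := ∀ s t u, StarRW R s t → StarRW R s u → Joinable R t u
def Convergent (R : TRS F) : Prop := Confluent R ∧ Terminating R

/-- every proper subterm is irreducible -/
def EpsIrreducible (R : TRS F) (t : Term F) : Prop :=
  ∀ p u, SubtermAt t p u → p ≠ [] → NormalForm R u

def InnermostRedex (R : TRS F) (t : Term F) : Prop :=
  EpsIrreducible R t ∧ ¬ NormalForm R t

/-- Forward-closed, via the one-step-to-normal-form characterization. -/
def FCclosed (R : TRS F) : Prop :=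
  ∀ t, InnermostRedex R t → ∀ u, NFof R t u → OneStep R t u

def Unifies (σ : Nat → Term F) (s t : Term F) : Prop := s.subst σ = t.subst σ

def IsMGU (σ : Nat → Term F) (s t : Term F) : Prop :=
  Unifies σ s t ∧ ∀ τ, Unifies τ s t → ∃ δ, ∀ x, τ x = (σ x).subst δ

def IsRenaming (ρ : Nat → Term F) : Prop :=
  ∃ f : Nat → Nat, Function.Injective f ∧ ∀ n, ρ n = Term.var (f n)

/-- Redundancy criterion for an oriented equation `e` whose right-hand side is
reachable from its left-hand side: some proper subterm of the lhs is reducible. -/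
def Redundant (R : TRS F) (e : Rule F) : Prop :=
  ∃ p u, p ≠ ([] : List Nat) ∧ SubtermAt e.1 p u ∧ ¬ NormalForm R u

/-- `R₁ ↝ R₂`: forward overlaps of rules of `R₂` (renamed apart) into
right-hand sides of rules of `R₁`, at non-variable positions, via an mgu. -/
def FStep (R₁ R₂ : TRS F) : TRS F :=
  { e | ∃ (l₁ r₁ l₂ r₂ : Term F) (ρ : Nat → Term F) (p : List Nat) (u : Term F)
          (σ : Nat → Term F) (r₁' : Term F),
      (l₁, r₁) ∈ R₁ ∧ (l₂, r₂) ∈ R₂ ∧ IsRenaming ρ ∧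
      SubtermAt r₁ p u ∧ ¬ u.IsVar ∧ IsMGU σ u (l₂.subst ρ) ∧
      ReplaceAt r₁ p (r₂.subst ρ) r₁' ∧ e = (l₁.subst σ, r₁'.subst σ) }

def FCiter (R : TRS F) : Nat → TRS F
  | 0 => R
  | k + 1 => FCiter R k ∪ { e | e ∈ FStep (FCiter R k) R ∧ ¬ Redundant (FCiter R k) e }

def FCinf (R : TRS F) : TRS F := ⋃ k, FCiter R k

/-- Forward-closed, via the forward-closure construction: `FC(R) = R`. -/
def ForwardClosedFC (R : TRS F) : Prop := FCinf R = R

/-- `RHS(R)`: `R` together with the conclusions of right-hand-side critical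
pair inferences (second rule renamed apart). -/
def RHSset (R : TRS F) : TRS F :=
  R ∪ { e | ∃ (s t u₀ v₀ : Term F) (ρ σ : Nat → Term F), (s, t) ∈ R ∧ (u₀, v₀) ∈ R ∧
        IsRenaming ρ ∧ IsMGU σ t (v₀.subst ρ) ∧
        s.subst σ ≠ (u₀.subst ρ).subst σ ∧ e = (s.subst σ, (u₀.subst ρ).subst σ) }

/-- the (unordered) pairs of root symbols of two equations coincide -/
def RootPairSimilar (e₁ e₂ : Rule F) : Prop :=
  (e₁.1.root = e₂.1.root ∧ e₁.2.root = e₂.2.root) ∨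
  (e₁.1.root = e₂.2.root ∧ e₁.2.root = e₂.1.root)

def QuasiDet (E : TRS F) : Prop :=
  (∀ e ∈ E, ¬ e.1.IsVar ∧ ¬ e.2.IsVar) ∧
  (∀ e ∈ E, e.1.root ≠ e.2.root) ∧
  (∀ e₁ ∈ E, ∀ e₂ ∈ E, e₁ ≠ e₂ → ¬ RootPairSimilar e₁ e₂)

def HasRootPairRepetition (E : TRS F) : Prop :=
  ∃ e₁ ∈ E, ∃ e₂ ∈ E, e₁ ≠ e₂ ∧ RootPairSimilar e₁ e₂

def VarPreserving (R : TRS F) : Prop :=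
  ∀ e ∈ R, ∀ n, n ∈ Term.varsL e.1 ↔ n ∈ Term.varsL e.2

def RightReduced (R : TRS F) : Prop := ∀ e ∈ R, NormalForm R e.2

def AlmostLeftReduced (R : TRS F) : Prop :=
  ¬ ∃ (l₁ r₁ l₂ r₂ : Term F) (p : List Nat) (u : Term F) (σ : Nat → Term F),
      (l₁, r₁) ∈ R ∧ (l₂, r₂) ∈ R ∧ p ≠ [] ∧ SubtermAt l₁ p u ∧ u = l₂.subst σ

def NonSubtermCollapsing (R : TRS F) : Prop :=
  ¬ ∃ (t u : Term F) (p : List Nat), p ≠ [] ∧ SubtermAt u p t ∧ Conv R t u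

structure LMSystem (R : TRS F) : Prop where
  convergent : Convergent R
  almostLeftReduced : AlmostLeftReduced R
  rightReduced : RightReduced R
  nonCollapsing : NonSubtermCollapsing R
  forwardClosed : FCclosed R
  quasiDet : QuasiDet (RHSset R)

/-- the symbol (function symbol or variable) of a term at a position, if defined -/
def labelAt {F : Type} : List Nat → Term F → Option (F ⊕ Nat)
  | [], t => some t.label
  | i :: p, Term.app _ ts => (ts[i]?).bind (labelAt p)
  | _ :: _, Term.var _ => none

/-- outermost distinguishing position -/
def ODP (s t : Term F) (p : List Nat) : Prop :=
  (labelAt p s ≠ none ∨ labelAt p t ≠ none) ∧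
  labelAt p s ≠ labelAt p t ∧
  ∀ q, q <+: p → q ≠ p → labelAt q s = labelAt q t

/-! Wherever `l₁` matches, the instance of `l₂` inside it matches as well, so every term reducible
by `l₁ → r₁` is already reducible by `l₂ → r₂`. -/

namespace Term

theorem subst_app (σ : Nat → Term F) (f : F) (ts : List (Term F)) :
    (app f ts).subst σ = app f (ts.map (subst σ)) := by
  simp [subst]

theorem subst_subst (σ τ : Nat → Term F) : ∀ t : Term F,
    (t.subst τ).subst σ = t.subst fun n => (τ n).subst σ
  | var n => by simp [subst]
  | app f ts => by
    rw [subst_app, subst_app, subst_app, List.map_map]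
    exact congrArg _ (List.map_congr_left fun t ht => subst_subst σ τ t)
termination_by t => sizeOf t
decreasing_by
  have := List.sizeOf_lt_of_mem ht
  simp only [app.sizeOf_spec]
  omega

end Term

namespace SubtermAt

theorem trans {a b c : Term F} {q p : List Nat} (hab : SubtermAt a q b) (hbc : SubtermAt b p c) :
    SubtermAt a (q ++ p) c := by
  induction hab with
  | here => simpa using hbc
  | there hget _ ih => exact there hget (ih hbc)

theorem subst {a b : Term F} {p : List Nat} (σ : Nat → Term F) (h : SubtermAt a p b) :
    SubtermAt (a.subst σ) p (b.subst σ) := by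
  induction h with
  | here => exact here _
  | there hget _ ih =>
    rw [Term.subst_app]
    exact there (by simp [hget]) ih

theorem exists_replaceAt {t v : Term F} {p : List Nat} (h : SubtermAt t p v) (w : Term F) :
    ∃ t', ReplaceAt t p w t' := by
  induction h with
  | here => exact ⟨w, ReplaceAt.here _ _⟩
  | there hget _ ih =>
    obtain ⟨t', ht'⟩ := ih
    exact ⟨_, ReplaceAt.there hget ht'⟩

end SubtermAt

theorem RuleStep.exists_of_subtermAt_lhs {l₁ r₁ l₂ r₂ u v : Term F} {p : List Nat}
    {s : Nat → Term F} (hsub : SubtermAt l₁ p (l₂.subst s)) (hstep : RuleStep (l₁, r₁) u v) :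
    ∃ w, RuleStep (l₂, r₂) u w := by
  obtain ⟨σ, q, hmatch, -⟩ := hstep
  have hredex : SubtermAt u (q ++ p) (l₂.subst fun n => (s n).subst σ) := by
    rw [← Term.subst_subst]
    exact hmatch.trans (hsub.subst σ)
  obtain ⟨w, hw⟩ := hredex.exists_replaceAt (r₂.subst fun n => (s n).subst σ)
  exact ⟨w, _, _, hredex, hw⟩

theorem NormalForm.anti {R R' : TRS F} (hR : R' ⊆ R) {t : Term F} (h : NormalForm R t) :
    NormalForm R' t :=
  fun v ⟨ρ, hρ, hstep⟩ => h v ⟨ρ, hR hρ, hstep⟩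

theorem NormalForm.of_sdiff_singleton {R : TRS F} {ρ : Rule F}
    (hρ : ∀ u v, RuleStep ρ u v → ∃ w, OneStep (R \ {ρ}) u w) {t : Term F}
    (h : NormalForm (R \ {ρ}) t) : NormalForm R t := by
  rintro v ⟨ρ', hρ', hstep⟩
  by_cases hρρ' : ρ' = ρ
  · subst hρρ'
    obtain ⟨w, hw⟩ := hρ t v hstep
    exact h w hw
  · exact h v ⟨ρ', ⟨hρ', hρρ'⟩, hstep⟩

theorem delete_rule_same_irr_general {F : Type} (R : TRS F)
    (l1 r1 l2 r2 : Term F) (h2 : (l2, r2) ∈ R)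
    (hne : (l1, r1) ≠ (l2, r2))
    (p : List Nat) (u : Term F) (s : Nat → Term F)
    (hsub : SubtermAt l1 p u) (hinst : u = l2.subst s) :
    { t : Term F | NormalForm R t } = { t : Term F | NormalForm (R \ {(l1, r1)}) t } := by
  subst hinst
  have h2' : (l2, r2) ∈ R \ {(l1, r1)} := ⟨h2, fun h => hne (Set.mem_singleton_iff.mp h).symm⟩
  ext t
  refine ⟨NormalForm.anti Set.sdiff_subset, NormalForm.of_sdiff_singleton fun _ _ hstep => ?_⟩
  obtain ⟨w, hw⟩ := hstep.exists_of_subtermAt_lhs (r₂ := r2) hsub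
  exact ⟨w, _, h2', hw⟩

/-- under the hypotheses of rule deletion, the irreducible terms of `R`
and of `R \ {l1 → r1}` coincide. -/
theorem delete_rule_same_irr {F : Type} (R : TRS F)
    (hconv : Convergent R) (hfc : FCclosed R)
    (l1 r1 l2 r2 : Term F) (h1 : (l1, r1) ∈ R) (h2 : (l2, r2) ∈ R)
    (hne : (l1, r1) ≠ (l2, r2))
    (p : List Nat) (u : Term F) (s : Nat → Term F)
    (hp : p ≠ []) (hsub : SubtermAt l1 p u) (hinst : u = l2.subst s) :
    { t : Term F | NormalForm R t } = { t : Term F | NormalForm (R \ {(l1, r1)}) t } :=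
  delete_rule_same_irr_general R l1 r1 l2 r2 h2 hne p u s hsub hinst
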